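/- The sequence m ↦ (−1)^m · I_{2m} / (√2 · (2m/e)^m) tends to 1 as m → ∞ (limit along the filter atTop on ℕ). -/

import Mathlib

open MeasureTheory Real

/-- Physicists' Hermite polynomials: `H 0 x = 1`, `H 1 x = 2x`,
`H (n+1) x = 2x * H n x - 2n * H (n-1) x`. -/
noncomputable def hermiteP : ℕ → ℝ → ℝ
  | 0, _ => 1
  | 1, x => 2 * x
  | n + 2, x => 2 * x * hermiteP (n + 1) x - 2 * ((n : ℝ) + 1) * hermiteP n x

/-- `I n = √(2/π) ∫ H_n(x) e^{-2x²} dx`. -/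
noncomputable def I (n : ℕ) : ℝ :=
  Real.sqrt (2 / π) * ∫ x : ℝ, hermiteP n x * Real.exp (-2 * x ^ 2)

/-!
Integrating `d/dx (H_{n+1}(x) e^{-2x²}) = -2 (H_{n+2}(x) + (n+1) H_n(x)) e^{-2x²}` over `ℝ` gives
`I_{n+2} = -(n+1) I_n`, and `I_0 = 1` is the Gaussian integral, so
`(-1)^m I_{2m} = (2m)! / (2^m m!)`. Divided by `√2 (2m/e)^m` this is exactly the quotient
`stirlingSeq (2m) / stirlingSeq m` of Stirling sequences, which tends to `√π / √π = 1`.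
-/

open Filter Polynomial Topology
open scoped Nat

lemma hermiteP_succ (n : ℕ) (x : ℝ) :
    hermiteP (n + 1) x = 2 * x * hermiteP n x - 2 * n * hermiteP (n - 1) x := by
  cases n <;> simp [hermiteP]

lemma hasDerivAt_hermiteP : ∀ (n : ℕ) (x : ℝ),
    HasDerivAt (hermiteP n) (2 * n * hermiteP (n - 1) x) x
  | 0, x => by simpa [hermiteP] using hasDerivAt_const x (1 : ℝ)
  | 1, x => by
    simpa [hermiteP] using ((hasDerivAt_id x).const_mul (2 : ℝ) : HasDerivAt (2 * ·) _ x)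
  | n + 2, x => by
    have h := (((hasDerivAt_id x).const_mul 2).mul (hasDerivAt_hermiteP (n + 1) x)).sub
      ((hasDerivAt_hermiteP n x).const_mul (2 * ((n : ℝ) + 1)))
    refine h.congr_deriv ?_
    simp only [id, add_tsub_cancel_right, Nat.add_succ_sub_one]
    push_cast
    linear_combination -2 * ((n : ℝ) + 1) * hermiteP_succ n x

lemma exists_eval_eq_hermiteP : ∀ n : ℕ, ∃ p : ℝ[X], ∀ x, p.eval x = hermiteP n x
  | 0 => ⟨1, fun _ => by simp [hermiteP]⟩
  | 1 => ⟨C 2 * X, fun _ => by simp [hermiteP]⟩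
  | n + 2 => by
    obtain ⟨p, hp⟩ := exists_eval_eq_hermiteP (n + 1)
    obtain ⟨q, hq⟩ := exists_eval_eq_hermiteP n
    exact ⟨C 2 * X * p - C (2 * ((n : ℝ) + 1)) * q, fun x => by simp [hp, hq, hermiteP]⟩

lemma integrable_eval_mul_exp_neg_mul_sq {b : ℝ} (hb : 0 < b) (p : ℝ[X]) :
    Integrable fun x => p.eval x * exp (-b * x ^ 2) := by
  induction p using Polynomial.induction_on' with
  | add p q hp hq => simpa only [eval_add, add_mul] using hp.fun_add hq
  | monomial n a =>
    have hpow := integrable_rpow_mul_exp_neg_mul_sq hb (neg_one_lt_zero.trans_le n.cast_nonneg)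
    simpa [mul_assoc, rpow_natCast] using hpow.const_mul a

lemma integrable_hermiteP_mul_exp_neg_mul_sq {b : ℝ} (hb : 0 < b) (n : ℕ) :
    Integrable fun x => hermiteP n x * exp (-b * x ^ 2) := by
  obtain ⟨p, hp⟩ := exists_eval_eq_hermiteP n
  simpa [hp] using integrable_eval_mul_exp_neg_mul_sq hb p

lemma hasDerivAt_hermiteP_succ_mul_exp (n : ℕ) (x : ℝ) :
    HasDerivAt (fun y => hermiteP (n + 1) y * exp (-2 * y ^ 2))
      (-2 * (hermiteP (n + 2) x * exp (-2 * x ^ 2))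
        - 2 * (n + 1) * (hermiteP n x * exp (-2 * x ^ 2))) x := by
  have h := (hasDerivAt_hermiteP (n + 1) x).mul (((hasDerivAt_pow 2 x).const_mul (-2 : ℝ)).exp)
  refine h.congr_deriv ?_
  rw [show hermiteP (n + 2) x = _ from hermiteP_succ (n + 1) x]
  push_cast
  ring

lemma I_add_two (n : ℕ) : I (n + 2) = -(n + 1) * I n := by
  have hint := integrable_hermiteP_mul_exp_neg_mul_sq two_pos
  have hzero := integral_eq_zero_of_hasDerivAt_of_integrable (hasDerivAt_hermiteP_succ_mul_exp n)
    (((hint _).const_mul _).sub ((hint _).const_mul _)) (hint (n + 1))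
  rw [integral_sub ((hint _).const_mul _) ((hint _).const_mul _), integral_const_mul,
    integral_const_mul] at hzero
  simp only [I]
  linear_combination (-sqrt (2 / π) / 2) * hzero

lemma I_zero : I 0 = 1 := by
  have h : sqrt (2 / π) * sqrt (π / 2) = 1 := by
    rw [← sqrt_mul (by positivity), div_mul_div_comm, mul_comm 2 π, div_self (by positivity),
      sqrt_one]
  simpa only [I, hermiteP, one_mul, integral_gaussian] using h

lemma I_two_mul (m : ℕ) : I (2 * m) = (-1) ^ m * ((2 * m)! / (2 ^ m * m !)) := by
  induction m with
  | zero => simp [I_zero]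
  | succ m ih =>
    rw [Nat.mul_succ, I_add_two, ih]
    simp only [Nat.factorial_succ]
    push_cast
    field_simp
    ring

lemma factorial_two_mul_div_eq_stirlingSeq_div {m : ℕ} (hm : m ≠ 0) :
    (2 * m)! / (2 ^ m * m !) / (sqrt 2 * (2 * m / exp 1) ^ m)
      = Stirling.stirlingSeq (2 * m) / Stirling.stirlingSeq m := by
  simp only [Stirling.stirlingSeq]
  push_cast
  rw [sqrt_mul zero_le_two (2 * m), mul_comm 2 m, pow_mul, mul_div_assoc, mul_pow]
  field_simp

lemma tendsto_stirlingSeq_two_mul_div :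
    Tendsto (fun m : ℕ => Stirling.stirlingSeq (2 * m) / Stirling.stirlingSeq m) atTop (𝓝 1) := by
  have h := (Stirling.tendsto_stirlingSeq_sqrt_pi.comp (tendsto_id.const_mul_atTop' two_pos)).div
    Stirling.tendsto_stirlingSeq_sqrt_pi (by positivity)
  rwa [div_self (by positivity)] at h

theorem I_asymptotic :
    Filter.Tendsto
      (fun m : ℕ =>
        (-1 : ℝ) ^ m * I (2 * m) / (Real.sqrt 2 * ((2 * m : ℝ) / Real.exp 1) ^ m))
      Filter.atTop (nhds 1) := by
  refine tendsto_stirlingSeq_two_mul_div.congr' ?_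
  filter_upwards [eventually_ne_atTop 0] with m hm
  rw [I_two_mul, ← mul_assoc, ← mul_pow, neg_one_mul, neg_neg, one_pow, one_mul,
    factorial_two_mul_div_eq_stirlingSeq_div hm]
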